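/- Let β ∈ (0,1)^n with ‖β‖₁ ≤ 1, w ∈ relint(Δⁿ), and let p be the relative entropy projection of w onto C(β). Suppose the coordinates are ordered so that w₁/β₁ ≤ w₂/β₂ ≤ … ≤ wₙ/βₙ. Then the set Ψ = {i : pᵢ = βᵢ} is a prefix: there exists k such that p = (β₁,…,β_k, λw_{k+1},…,λwₙ) with λ = (1−Σ_{i≤k}βᵢ)/(1−Σ_{i≤k}wᵢ). -/

import Mathlib

/-!
If `pᵢ > βᵢ`, shifting a little mass from `i` to any `j` stays in `C(β)`, so first-order
optimality gives `log (pᵢ/wᵢ) + 1 ≤ log (pⱼ/wⱼ) + 1`: all unclamped coordinates share the minimal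
ratio `λ = pᵢ/wᵢ`. If `i` is clamped and `j ≤ i` were not, then
`pⱼ/wⱼ ≤ βᵢ/wᵢ ≤ βⱼ/wⱼ` by the ordering, contradicting `pⱼ > βⱼ`. Hence the clamped set is an
initial segment, and `∑ p = 1` determines `λ`.
-/

open Finset Real Filter Topology Function
open scoped Classical

theorem HasDerivAt.le_of_forall_transfer {f g : ℝ → ℝ} {a b f' g' : ℝ}
    (hf : HasDerivAt f f' a) (hg : HasDerivAt g g' b)
    (h : ∀ᶠ t in 𝓝[>] 0, f a + g b ≤ f (a - t) + g (b + t)) : f' ≤ g' := by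
  have hφ : HasDerivAt (fun t => f (a - t) + g (b + t)) (-f' + g') 0 :=
    (HasDerivAt.comp_const_sub a 0 (by simpa using hf)).add
      (HasDerivAt.comp_const_add b 0 (by simpa using hg))
  have hslope : 0 ≤ -f' + g' := by
    refine ge_of_tendsto hφ.tendsto_slope_zero_right ?_
    filter_upwards [h, self_mem_nhdsWithin] with t ht ht0
    simp only [zero_add, sub_zero, add_zero, smul_eq_mul]
    exact mul_nonneg (inv_nonneg.2 (le_of_lt ht0)) (sub_nonneg.2 ht)
  linarith

section Transfer

variable {ι : Type*} [Fintype ι] [DecidableEq ι]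

theorem sum_apply_update_update_sub (F : ι → ℝ → ℝ) (p : ι → ℝ) {i j : ι} (hij : i ≠ j)
    (x y : ℝ) :
    ∑ m, F m (update (update p i x) j y m) - ∑ m, F m (p m)
      = (F i x - F i (p i)) + (F j y - F j (p j)) := by
  rw [← sum_sub_distrib, Fintype.sum_eq_add i j hij]
  · simp [hij]
  · rintro m ⟨hmi, hmj⟩
    simp [hmi, hmj]

/-- The set `C(β)`; for `β ≥ 0` it lies in the simplex, so nonnegativity is not imposed. -/
def simplexAbove (β : ι → ℝ) : Set (ι → ℝ) := {u | (∀ i, β i ≤ u i) ∧ ∑ i, u i = 1}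

theorem IsMinOn.le_of_hasDerivAt_of_lt {β p : ι → ℝ} {F : ι → ℝ → ℝ} {i j : ι} {di dj : ℝ}
    (hmin : IsMinOn (fun u => ∑ m, F m (u m)) (simplexAbove β) p) (hp : p ∈ simplexAbove β)
    (hij : i ≠ j) (hi : β i < p i) (hFi : HasDerivAt (F i) di (p i))
    (hFj : HasDerivAt (F j) dj (p j)) : di ≤ dj := by
  refine hFi.le_of_forall_transfer hFj ?_
  filter_upwards [Ioo_mem_nhdsGT (sub_pos.2 hi)] with t ⟨ht0, hti⟩
  set u := update (update p i (p i - t)) j (p j + t)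
  have hu : u ∈ simplexAbove β := by
    refine ⟨fun m => ?_, ?_⟩
    · rcases eq_or_ne m j with rfl | hmj
      · simp only [u, update_self]; linarith [hp.1 m]
      rcases eq_or_ne m i with rfl | hmi
      · simp only [u, update_of_ne hmj, update_self]; linarith
      simpa [u, hmi, hmj] using hp.1 m
    · have := sum_apply_update_update_sub (fun _ x => x) p hij (p i - t) (p j + t)
      linarith [hp.2]
  have hcost := sum_apply_update_update_sub F p hij (p i - t) (p j + t)
  linarith [isMinOn_iff.1 hmin u hu]

end Transfer

theorem Real.hasDerivAt_mul_log_div {x w : ℝ} (hx : x ≠ 0) (hw : w ≠ 0) :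
    HasDerivAt (fun y => y * log (y / w)) (log (x / w) + 1) x := by
  have h : HasDerivAt (fun y => y * log (y / w)) (1 * log (x / w) + x * (1 / w / (x / w))) x :=
    (hasDerivAt_id' x).mul (((hasDerivAt_id' x).div_const w).log (div_ne_zero hx hw))
  convert h using 1
  field_simp

section Projection

variable {ι : Type*} [Fintype ι]

noncomputable def relEntropy (u w : ι → ℝ) : ℝ := ∑ i, u i * log (u i / w i)

theorem div_le_div_of_isMinOn_relEntropy [DecidableEq ι] {β w p : ι → ℝ}
    (hmin : IsMinOn (relEntropy · w) (simplexAbove β) p) (hp : p ∈ simplexAbove β)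
    (hβ : ∀ m, 0 < β m) (hw : ∀ m, 0 < w m) {i : ι} (hi : β i < p i) (j : ι) :
    p i / w i ≤ p j / w j := by
  have hpos : ∀ m, 0 < p m := fun m => (hβ m).trans_le (hp.1 m)
  rcases eq_or_ne i j with rfl | hij
  · exact le_rfl
  have hlog : log (p i / w i) + 1 ≤ log (p j / w j) + 1 :=
    hmin.le_of_hasDerivAt_of_lt (F := fun m x => x * log (x / w m)) hp hij hi
      (hasDerivAt_mul_log_div (hpos i).ne' (hw i).ne')
      (hasDerivAt_mul_log_div (hpos j).ne' (hw j).ne')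
  exact (log_le_log_iff (div_pos (hpos i) (hw i)) (div_pos (hpos j) (hw j))).1 (by linarith)

theorem eq_div_mul_of_proportional_off {S : Finset ι} {β w p : ι → ℝ} {c : ℝ}
    (hS : ∀ m ∈ S, p m = β m) (hSc : ∀ m ∉ S, p m = c * w m) (hp : ∑ m, p m = 1)
    (hw1 : ∑ m, w m = 1) (hw : ∀ m, 0 < w m) {i : ι} (hi : i ∉ S) :
    p i = (1 - ∑ m ∈ S, β m) / (1 - ∑ m ∈ S, w m) * w i := by
  have hβS : ∑ m ∈ S, p m = ∑ m ∈ S, β m := sum_congr rfl hS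
  have hpSc : ∑ m ∈ Sᶜ, p m = c * ∑ m ∈ Sᶜ, w m := by
    rw [mul_sum]; exact sum_congr rfl fun m hm => hSc m (mem_compl.1 hm)
  have hp_split := sum_add_sum_compl S p
  have hw_split := sum_add_sum_compl S w
  have hwSc : 0 < ∑ m ∈ Sᶜ, w m := sum_pos (fun m _ => hw m) ⟨i, mem_compl.2 hi⟩
  have hc : c = (1 - ∑ m ∈ S, β m) / (1 - ∑ m ∈ S, w m) := by
    rw [eq_div_iff (by linarith)]
    linear_combination hp_split + hp - hβS - hpSc - c * hw_split - c * hw1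
  rw [hSc i hi, hc]

end Projection

theorem isLowerSet_setOf_eq_of_monotone_div {ι : Type*} [Preorder ι] {β w p : ι → ℝ}
    (hβ : ∀ i, 0 < β i) (hw : ∀ i, 0 < w i) (hmono : Monotone fun i => w i / β i)
    (hpβ : ∀ i, β i ≤ p i) (hratio : ∀ i, β i < p i → ∀ j, p i / w i ≤ p j / w j) :
    IsLowerSet {i | p i = β i} := by
  intro i j hji (hi : p i = β i)
  by_contra hj
  have hjp : β j < p j := (hpβ j).lt_of_ne (Ne.symm hj)
  have hp : p j / w j ≤ β i / w i := hi ▸ hratio j hjp i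
  have hβ' : β i / w i ≤ β j / w j := by
    simpa only [inv_div] using inv_anti₀ (div_pos (hw j) (hβ j)) (hmono hji)
  have := (div_le_div_iff_of_pos_right (hw j)).1 (hp.trans hβ')
  linarith

theorem Fin.mem_iff_lt_card_of_isLowerSet {n : ℕ} {S : Finset (Fin n)}
    (hS : IsLowerSet (S : Set (Fin n))) (i : Fin n) : i ∈ S ↔ (i : ℕ) < #S := by
  constructor
  · intro hi
    have h := card_le_card fun j hj => hS (mem_Iic.1 hj) hi
    rw [Fin.card_Iic] at h
    omega
  · intro hi
    by_contra hni
    have h := card_le_card fun j (hj : j ∈ S) =>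
      mem_Iio.2 (lt_of_not_ge fun hij => hni (hS hij hj))
    rw [Fin.card_Iio] at h
    omega

theorem stmt_10_general (n : ℕ) (β w p : Fin n → ℝ)
    (hβ : ∀ i, β i ∈ Set.Ioo (0:ℝ) 1)
    (hw : ∀ i, 0 < w i) (hw1 : ∑ i, w i = 1)
    (hord : ∀ i j : Fin n, i ≤ j → w i / β i ≤ w j / β j)
    (hpC : (∀ i, β i ≤ p i) ∧ (∀ i, 0 ≤ p i) ∧ ∑ i, p i = 1)
    (hmin : ∀ u : Fin n → ℝ, (∀ i, β i ≤ u i) → (∀ i, 0 ≤ u i) → ∑ i, u i = 1 →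
      ∑ i, p i * Real.log (p i / w i) ≤ ∑ i, u i * Real.log (u i / w i)) :
    ∃ k ≤ n, ∀ i : Fin n,
      p i = if (i : ℕ) < k then β i
        else ((1 - ∑ j ∈ Finset.univ.filter (fun j : Fin n => (j : ℕ) < k), β j) /
              (1 - ∑ j ∈ Finset.univ.filter (fun j : Fin n => (j : ℕ) < k), w j)) * w i := by
  obtain ⟨hpβ, -, hp1⟩ := hpC
  have hβ0 : ∀ i, 0 < β i := fun i => (hβ i).1
  have hp : p ∈ simplexAbove β := ⟨hpβ, hp1⟩
  have hopt : IsMinOn (relEntropy · w) (simplexAbove β) p :=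
    isMinOn_iff.2 fun u hu => hmin u hu.1 (fun i => (hβ0 i).le.trans (hu.1 i)) hu.2
  have hratio := fun i => div_le_div_of_isMinOn_relEntropy hopt hp hβ0 hw (i := i)
  set S := univ.filter fun i => p i = β i
  have hS : IsLowerSet (S : Set (Fin n)) := by
    simpa [S] using isLowerSet_setOf_eq_of_monotone_div hβ0 hw (fun i j h => hord i j h) hpβ hratio
  have hmemS := Fin.mem_iff_lt_card_of_isLowerSet hS
  have hSk : univ.filter (fun j : Fin n => (j : ℕ) < #S) = S := by
    ext i; rw [hmemS i, mem_filter, and_iff_right (mem_univ i)]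
  refine ⟨#S, (card_le_univ S).trans_eq (Fintype.card_fin n), fun i => ?_⟩
  rw [hSk]
  split_ifs with hi
  · exact (mem_filter.1 ((hmemS i).2 hi)).2
  have hfree : ∀ m ∉ S, β m < p m := fun m hm => (hpβ m).lt_of_ne fun h => hm (by simp [S, h])
  have hiS : i ∉ S := fun h => hi ((hmemS i).1 h)
  refine eq_div_mul_of_proportional_off (c := p i / w i) (fun m hm => (mem_filter.1 hm).2)
    (fun m hm => ?_) hp1 hw1 hw hiS
  rw [← le_antisymm (hratio m (hfree m hm) i) (hratio i (hfree i hiS) m),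
    div_mul_cancel₀ _ (hw m).ne']

/-- Claim 1: under the ratio ordering, the set of clamped
components of the relative entropy projection is a prefix. -/
theorem stmt_10 (n : ℕ) (β w p : Fin n → ℝ)
    (hβ : ∀ i, β i ∈ Set.Ioo (0:ℝ) 1) (hβ1 : ∑ i, β i ≤ 1)
    (hw : ∀ i, 0 < w i) (hw1 : ∑ i, w i = 1)
    (hord : ∀ i j : Fin n, i ≤ j → w i / β i ≤ w j / β j)
    (hpC : (∀ i, β i ≤ p i) ∧ (∀ i, 0 ≤ p i) ∧ ∑ i, p i = 1)
    (hmin : ∀ u : Fin n → ℝ, (∀ i, β i ≤ u i) → (∀ i, 0 ≤ u i) → ∑ i, u i = 1 →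
      ∑ i, p i * Real.log (p i / w i) ≤ ∑ i, u i * Real.log (u i / w i)) :
    ∃ k ≤ n, ∀ i : Fin n,
      p i = if (i : ℕ) < k then β i
        else ((1 - ∑ j ∈ Finset.univ.filter (fun j : Fin n => (j : ℕ) < k), β j) /
              (1 - ∑ j ∈ Finset.univ.filter (fun j : Fin n => (j : ℕ) < k), w j)) * w i :=
  stmt_10_general n β w p hβ hw hw1 hord hpC hmin
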